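/- Let σ be a finite Borel measure on the unit sphere S² ⊆ ℝ³ with σ(S²) > 0, let ȳ : S² → ℝ^m be continuous with all entries nonnegative, and let α > 0. Set y_a = (1/σ(S²)) ∫_{S²} ȳ(u) dσ(u), assume y_a ≠ 0, and set y̆(u) = ȳ(u) + α·y_a (so every y̆(u) is nonzero with nonnegative entries). Let C̆ be the conic hull of { y̆(u) : u ∈ S² }, let u₁, …, u_N ∈ S², and let C̄ be the conic hull of { y̆(u₁), …, y̆(u_N), y_a }. Define η⋆ = sup_{w ∈ ℝ^m, ‖w‖₂ ≤ 1} inf_{u ∈ S²} ⟨w, y̆(u)/‖y̆(u)‖₂⟩. Suppose ε ≥ 0 is such that for every u ∈ S² there exists i with ‖ȳ(u) − ȳ(uᵢ)‖₂ ≤ ε. Then δ(C̆, C̄) ≤ 2ε / (η⋆ · α · ‖y_a‖₂). -/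

import Mathlib

/-!
Write y̆ = ȳ + α y_a. Since y_a is an average of the nonnegative vectors ȳ(u), every y̆(u)
dominates α y_a entrywise, so ‖y̆(u)‖ ≥ α ‖y_a‖. Testing a conic combination y = Σ cⱼ y̆(vⱼ)
against the vectors w in the definition of η⋆ then gives η⋆ α ‖y_a‖ Σ cⱼ ≤ ‖y‖. Moving each vⱼ to a
point uᵢ with ‖ȳ(vⱼ) − ȳ(uᵢ)‖ ≤ ε moves y by at most ε Σ cⱼ ≤ ε ‖y‖ / (η⋆ α ‖y_a‖) into C̄.
Conversely, (1 + α) y_a is the σ-average of y̆, so it lies in the closure of the cone C̆; hence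
C̄ is contained in the closure of C̆ and the other half of the discrepancy vanishes.
-/

open MeasureTheory
open scoped RealInnerProductSpace

abbrev Sphere2 : Type := Metric.sphere (0 : EuclideanSpace ℝ (Fin 3)) 1

def conicHull {m : ℕ} (A : Set (EuclideanSpace ℝ (Fin m))) : Set (EuclideanSpace ℝ (Fin m)) :=
  {y | ∃ (k : ℕ) (c : Fin k → ℝ) (a : Fin k → EuclideanSpace ℝ (Fin m)),
      (∀ i, 0 ≤ c i) ∧ (∀ i, a i ∈ A) ∧ y = ∑ i, c i • a i}

/-- Suprema over empty sets are `0`. -/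
noncomputable def coneDisc {m : ℕ} (C Chat : Set (EuclideanSpace ℝ (Fin m))) : ℝ :=
  max (⨆ y : {y : EuclideanSpace ℝ (Fin m) // y ∈ C ∧ ‖y‖ = 1},
        Metric.infDist (y : EuclideanSpace ℝ (Fin m)) Chat)
      (⨆ y : {y : EuclideanSpace ℝ (Fin m) // y ∈ Chat ∧ ‖y‖ = 1},
        Metric.infDist (y : EuclideanSpace ℝ (Fin m)) C)

/-- The paper's η⋆ for the map `yb` = y̆. -/
noncomputable def etaStar {m : ℕ} (yb : Sphere2 → EuclideanSpace ℝ (Fin m)) : ℝ :=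
  ⨆ w : {w : EuclideanSpace ℝ (Fin m) // ‖w‖ ≤ 1},
    ⨅ u : Sphere2, (inner ℝ (w : EuclideanSpace ℝ (Fin m)) (‖yb u‖⁻¹ • yb u) : ℝ)

instance : Nonempty Sphere2 := (NormedSpace.sphere_nonempty.mpr zero_le_one).to_subtype

section InnerProductSpace

variable {E : Type*} [NormedAddCommGroup E] [InnerProductSpace ℝ E]

theorem norm_le_norm_add_of_inner_nonneg {x z : E} (h : 0 ≤ ⟪x, z⟫) : ‖z‖ ≤ ‖x + z‖ := by
  have := norm_add_sq_real x z
  nlinarith [norm_nonneg x, norm_nonneg z, norm_nonneg (x + z)]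

theorem abs_inner_inv_norm_smul_le_one {w : E} (hw : ‖w‖ ≤ 1) (x : E) :
    |⟪w, ‖x‖⁻¹ • x⟫| ≤ 1 := by
  have hx : ‖‖x‖⁻¹ • x‖ ≤ 1 := by
    rcases eq_or_ne x 0 with rfl | hx
    · simp
    · exact (norm_smul_inv_norm hx).le
  exact (abs_real_inner_le_norm _ _).trans (mul_le_one₀ hw (norm_nonneg _) hx)

theorem norm_sum_smul_sub_sum_smul_le {ι : Type*} (s : Finset ι) {c : ι → ℝ}
    (hc : ∀ j ∈ s, 0 ≤ c j) {a b : ι → E} {ε : ℝ} (hab : ∀ j ∈ s, ‖a j - b j‖ ≤ ε) :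
    ‖∑ j ∈ s, c j • a j - ∑ j ∈ s, c j • b j‖ ≤ ε * ∑ j ∈ s, c j := by
  rw [← Finset.sum_sub_distrib, Finset.mul_sum]
  refine (norm_sum_le _ _).trans (Finset.sum_le_sum fun j hj => ?_)
  rw [← smul_sub, norm_smul, Real.norm_of_nonneg (hc j hj), mul_comm]
  exact mul_le_mul_of_nonneg_right (hab j hj) (hc j hj)

end InnerProductSpace

section NonnegOrthant

variable {m : ℕ}

theorem inner_nonneg_of_forall_nonneg {x z : EuclideanSpace ℝ (Fin m)}
    (hx : ∀ i, 0 ≤ x i) (hz : ∀ i, 0 ≤ z i) : 0 ≤ ⟪x, z⟫ := by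
  rw [PiLp.inner_apply]
  exact Finset.sum_nonneg fun i _ => mul_nonneg (hz i) (hx i)

theorem norm_le_sum_of_forall_nonneg {z : EuclideanSpace ℝ (Fin m)} (hz : ∀ i, 0 ≤ z i) :
    ‖z‖ ≤ ∑ i, z i := by
  rw [EuclideanSpace.norm_eq, Real.sqrt_le_iff]
  refine ⟨Finset.sum_nonneg fun i _ => hz i, ?_⟩
  simpa only [Real.norm_eq_abs, sq_abs] using
    Finset.sum_sq_le_sq_sum_of_nonneg fun i _ => hz i

theorem isClosed_setOf_forall_nonneg :
    IsClosed {x : EuclideanSpace ℝ (Fin m) | ∀ i, 0 ≤ x i} := by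
  simp only [Set.ofPred_forall]
  exact isClosed_iInter fun i => isClosed_le continuous_const (PiLp.continuous_apply 2 _ i)

theorem convex_setOf_forall_nonneg :
    Convex ℝ {x : EuclideanSpace ℝ (Fin m) | ∀ i, 0 ≤ x i} := by
  intro x hx y hy a b ha hb _ i
  simp only [PiLp.add_apply, PiLp.smul_apply, smul_eq_mul]
  exact add_nonneg (mul_nonneg ha (hx i)) (mul_nonneg hb (hy i))

theorem average_apply_nonneg {α : Type*} [MeasurableSpace α] {μ : Measure α} [IsFiniteMeasure μ]
    [NeZero μ] {f : α → EuclideanSpace ℝ (Fin m)} (hf : ∀ x i, 0 ≤ f x i)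
    (hfi : Integrable f μ) (i : Fin m) : 0 ≤ (⨍ x, f x ∂μ) i :=
  convex_setOf_forall_nonneg.average_mem isClosed_setOf_forall_nonneg (ae_of_all _ hf) hfi i

end NonnegOrthant

section ConicHull

variable {m : ℕ}

theorem conicHull_eq_hull (A : Set (EuclideanSpace ℝ (Fin m))) :
    conicHull A = PointedCone.hull ℝ A := by
  ext y
  rw [SetLike.mem_coe, Submodule.mem_span_set']
  constructor
  · rintro ⟨k, c, a, hc, ha, rfl⟩
    exact ⟨k, fun i => ⟨c i, hc i⟩, fun i => ⟨a i, ha i⟩, rfl⟩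
  · rintro ⟨k, c, a, rfl⟩
    exact ⟨k, fun i => c i, fun i => a i, fun i => (c i).2, fun i => (a i).2, rfl⟩

theorem subset_conicHull (A : Set (EuclideanSpace ℝ (Fin m))) : A ⊆ conicHull A := by
  rw [conicHull_eq_hull]
  exact PointedCone.subset_hull

theorem conicHull_subset_closure_conicHull {A B : Set (EuclideanSpace ℝ (Fin m))}
    (h : A ⊆ closure (conicHull B)) : conicHull A ⊆ closure (conicHull B) := by
  simp only [conicHull_eq_hull, ← PointedCone.coe_closure] at h ⊢
  exact Submodule.span_le.mpr h

theorem smul_mem_closure_conicHull {A : Set (EuclideanSpace ℝ (Fin m))} {t : ℝ} (ht : 0 ≤ t)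
    {x : EuclideanSpace ℝ (Fin m)} (hx : x ∈ closure (conicHull A)) :
    t • x ∈ closure (conicHull A) := by
  rw [conicHull_eq_hull, ← PointedCone.coe_closure] at hx ⊢
  exact PointedCone.smul_mem _ ht hx

theorem average_mem_closure_conicHull_range {α : Type*} [MeasurableSpace α] {μ : Measure α}
    [IsFiniteMeasure μ] [NeZero μ] {f : α → EuclideanSpace ℝ (Fin m)} (hf : Integrable f μ) :
    ⨍ x, f x ∂μ ∈ closure (conicHull (Set.range f)) := by
  rw [conicHull_eq_hull, ← PointedCone.coe_closure]
  exact (PointedCone.convex _).average_mem isClosed_closure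
    (ae_of_all _ fun x => subset_closure (PointedCone.subset_hull ⟨x, rfl⟩)) hf

theorem coneDisc_le {C C' : Set (EuclideanSpace ℝ (Fin m))} {b : ℝ} (hb : 0 ≤ b)
    (hC : ∀ y ∈ C, ‖y‖ = 1 → Metric.infDist y C' ≤ b)
    (hC' : ∀ y ∈ C', ‖y‖ = 1 → Metric.infDist y C ≤ b) : coneDisc C C' ≤ b :=
  max_le (Real.iSup_le (fun y => hC y y.2.1 y.2.2) hb)
    (Real.iSup_le (fun y => hC' y y.2.1 y.2.2) hb)

end ConicHull

section EtaStar

variable {m : ℕ}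

theorem bddBelow_range_inner_inv_norm_smul (f : Sphere2 → EuclideanSpace ℝ (Fin m))
    {w : EuclideanSpace ℝ (Fin m)} (hw : ‖w‖ ≤ 1) :
    BddBelow (Set.range fun u : Sphere2 => ⟪w, ‖f u‖⁻¹ • f u⟫) :=
  ⟨-1, by rintro _ ⟨u, rfl⟩; exact neg_le_of_abs_le (abs_inner_inv_norm_smul_le_one hw _)⟩

theorem etaStar_pos {f : Sphere2 → EuclideanSpace ℝ (Fin m)} (hf : ∀ v i, 0 ≤ f v i)
    (hf0 : ∀ v, f v ≠ 0) : 0 < etaStar f := by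
  set e : EuclideanSpace ℝ (Fin m) := WithLp.toLp 2 fun _ => 1
  have hm : 0 < m := Nat.pos_of_ne_zero fun hm =>
    hf0 (Classical.arbitrary _) (by subst hm; exact Subsingleton.elim _ _)
  have he : e ≠ 0 := fun h =>
    one_ne_zero (congrArg (fun x : EuclideanSpace ℝ (Fin m) => x ⟨0, hm⟩) h)
  have key : ∀ v, ‖e‖⁻¹ ≤ ⟪‖e‖⁻¹ • e, ‖f v‖⁻¹ • f v⟫ := fun v => by
    have hfv : 0 < ‖f v‖ := norm_pos_iff.mpr (hf0 v)
    have he_inner : ⟪e, f v⟫ = ∑ i, f v i := by simp [e, PiLp.inner_apply]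
    rw [real_inner_smul_left, real_inner_smul_right, he_inner]
    calc ‖e‖⁻¹ = ‖e‖⁻¹ * (‖f v‖⁻¹ * ‖f v‖) := by rw [inv_mul_cancel₀ hfv.ne', mul_one]
      _ ≤ ‖e‖⁻¹ * (‖f v‖⁻¹ * ∑ i, f v i) := by
          gcongr
          exact norm_le_sum_of_forall_nonneg (hf v)
  have hbdd : BddAbove (Set.range fun w : {w : EuclideanSpace ℝ (Fin m) // ‖w‖ ≤ 1} =>
      ⨅ u : Sphere2, ⟪(w : EuclideanSpace ℝ (Fin m)), ‖f u‖⁻¹ • f u⟫) := by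
    refine ⟨1, ?_⟩
    rintro _ ⟨w, rfl⟩
    exact (ciInf_le (bddBelow_range_inner_inv_norm_smul f w.2) (Classical.arbitrary _)).trans
      (le_of_abs_le (abs_inner_inv_norm_smul_le_one w.2 _))
  calc 0 < ‖e‖⁻¹ := inv_pos.mpr (norm_pos_iff.mpr he)
    _ ≤ ⨅ v, ⟪‖e‖⁻¹ • e, ‖f v‖⁻¹ • f v⟫ := le_ciInf key
    _ ≤ etaStar f := le_ciSup hbdd ⟨_, (norm_smul_inv_norm he).le⟩

theorem etaStar_mul_sum_le_norm_sum {f : Sphere2 → EuclideanSpace ℝ (Fin m)} {r : ℝ}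
    (hr : 0 < r) (hf : ∀ v, r ≤ ‖f v‖) {k : ℕ} {c : Fin k → ℝ} (hc : ∀ j, 0 ≤ c j)
    (v : Fin k → Sphere2) :
    etaStar f * r * ∑ j, c j ≤ ‖∑ j, c j • f (v j)‖ := by
  have hS : 0 ≤ r * ∑ j, c j := mul_nonneg hr.le (Finset.sum_nonneg fun j _ => hc j)
  rw [etaStar, mul_assoc, Real.iSup_mul_of_nonneg hS]
  refine Real.iSup_le (fun w => ?_) (norm_nonneg _)
  set g := ⨅ u, ⟪(w : EuclideanSpace ℝ (Fin m)), ‖f u‖⁻¹ • f u⟫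
  rcases le_or_gt g 0 with hg | hg
  · exact (mul_nonpos_of_nonpos_of_nonneg hg hS).trans (norm_nonneg _)
  have hterm : ∀ j, g * r ≤ ⟪(w : EuclideanSpace ℝ (Fin m)), f (v j)⟫ := fun j => by
    have hgj := ciInf_le (bddBelow_range_inner_inv_norm_smul f w.2) (v j)
    calc g * r ≤ ⟪(w : EuclideanSpace ℝ (Fin m)), ‖f (v j)‖⁻¹ • f (v j)⟫ * ‖f (v j)‖ :=
          mul_le_mul hgj (hf _) hr.le (hg.le.trans hgj)
      _ = _ := by
          rw [inner_smul_right, mul_comm, ← mul_assoc,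
            mul_inv_cancel₀ (hr.trans_le (hf _)).ne', one_mul]
  calc g * (r * ∑ j, c j) = ∑ j, c j * (g * r) := by
        rw [Finset.mul_sum, Finset.mul_sum]
        exact Finset.sum_congr rfl fun j _ => by ring
    _ ≤ ∑ j, c j * ⟪(w : EuclideanSpace ℝ (Fin m)), f (v j)⟫ :=
        Finset.sum_le_sum fun j _ => mul_le_mul_of_nonneg_left (hterm j) (hc j)
    _ = ⟪(w : EuclideanSpace ℝ (Fin m)), ∑ j, c j • f (v j)⟫ := by
        simp only [inner_sum, real_inner_smul_right]
    _ ≤ ‖(w : EuclideanSpace ℝ (Fin m))‖ * ‖∑ j, c j • f (v j)‖ := real_inner_le_norm _ _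
    _ ≤ ‖∑ j, c j • f (v j)‖ := mul_le_of_le_one_left (norm_nonneg _) w.2

theorem infDist_conicHull_le {f : Sphere2 → EuclideanSpace ℝ (Fin m)}
    {T : Set (EuclideanSpace ℝ (Fin m))} {r ε : ℝ} (hr : 0 < r) (hf : ∀ v, r ≤ ‖f v‖)
    (hη : 0 < etaStar f) (hε : 0 ≤ ε)
    (hT : ∀ v, ∃ t ∈ T, ‖f v - t‖ ≤ ε) {y : EuclideanSpace ℝ (Fin m)}
    (hy : y ∈ conicHull (Set.range f)) :
    Metric.infDist y (conicHull T) ≤ ε * ‖y‖ / (etaStar f * r) := by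
  obtain ⟨k, c, a, hc, ha, rfl⟩ := hy
  choose v hv using ha
  simp only [← hv]
  choose t htT ht using fun j => hT (v j)
  have hdist : Metric.infDist (∑ j, c j • f (v j)) (conicHull T) ≤ ε * ∑ j, c j := by
    have hmem : ∑ j, c j • t j ∈ conicHull T := ⟨k, c, t, hc, htT, rfl⟩
    refine (Metric.infDist_le_dist_of_mem hmem).trans ?_
    rw [dist_eq_norm]
    exact norm_sum_smul_sub_sum_smul_le _ (fun j _ => hc j) fun j _ => ht j
  rw [le_div_iff₀ (by positivity)]
  calc Metric.infDist (∑ j, c j • f (v j)) (conicHull T) * (etaStar f * r)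
      ≤ ε * (∑ j, c j) * (etaStar f * r) := by gcongr
    _ = ε * (etaStar f * r * ∑ j, c j) := by ring
    _ ≤ ε * ‖∑ j, c j • f (v j)‖ := by gcongr; exact etaStar_mul_sum_le_norm_sum hr hf hc v

end EtaStar

theorem stmt5 {m N : ℕ} (σ : Measure Sphere2) [IsFiniteMeasure σ]
    (hσpos : 0 < σ Set.univ)
    (ybar : Sphere2 → EuclideanSpace ℝ (Fin m)) (hy : Continuous ybar)
    (hnn : ∀ (u : Sphere2) (i : Fin m), 0 ≤ ybar u i)
    (α : ℝ) (hα : 0 < α)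
    (ya : EuclideanSpace ℝ (Fin m))
    (hya : ya = (σ Set.univ).toReal⁻¹ • ∫ u, ybar u ∂σ)
    (hya0 : ya ≠ 0)
    (u : Fin N → Sphere2) (ε : ℝ) (hε : 0 ≤ ε)
    (hcover : ∀ v : Sphere2, ∃ i, ‖ybar v - ybar (u i)‖ ≤ ε) :
    coneDisc (conicHull (Set.range fun v => ybar v + α • ya))
        (conicHull (insert ya (Set.range fun i => ybar (u i) + α • ya)))
      ≤ 2 * ε / (etaStar (fun v => ybar v + α • ya) * α * ‖ya‖) := by
  set yb : Sphere2 → EuclideanSpace ℝ (Fin m) := fun v => ybar v + α • ya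
  have : NeZero σ := ⟨Measure.measure_univ_ne_zero.mp hσpos.ne'⟩
  have hint : Integrable ybar σ := hy.integrable_of_hasCompactSupport (.of_compactSpace _)
  have hya_avg : ya = ⨍ v, ybar v ∂σ := by rw [hya, average_eq, measureReal_def]
  have hαya_nn : ∀ i, 0 ≤ (α • ya) i := fun i =>
    mul_nonneg hα.le (hya_avg ▸ average_apply_nonneg hnn hint i)
  have hr : 0 < α * ‖ya‖ := mul_pos hα (norm_pos_iff.mpr hya0)
  have hyb_norm : ∀ v, α * ‖ya‖ ≤ ‖yb v‖ := fun v => by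
    rw [← norm_smul_of_nonneg hα.le]
    exact norm_le_norm_add_of_inner_nonneg (inner_nonneg_of_forall_nonneg (hnn v) hαya_nn)
  have hη : 0 < etaStar yb := etaStar_pos (fun v i => add_nonneg (hnn v i) (hαya_nn i))
    fun v => norm_pos_iff.mp (hr.trans_le (hyb_norm v))
  have hya_mem : ya ∈ closure (conicHull (Set.range yb)) := by
    have havg : ⨍ v, yb v ∂σ = (1 + α) • ya := by
      rw [average_eq, integral_add hint (integrable_const _), smul_add, ← average_eq,
        integral_const, smul_smul, inv_mul_cancel₀ measureReal_univ_ne_zero, one_smul,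
        ← hya_avg, add_smul, one_smul]
    have := smul_mem_closure_conicHull (inv_nonneg.mpr (by positivity : (0 : ℝ) ≤ 1 + α))
      (average_mem_closure_conicHull_range (f := yb) (hint.add (integrable_const _)))
    rwa [havg, smul_smul, inv_mul_cancel₀ (by positivity), one_smul] at this
  apply coneDisc_le (by positivity)
  · intro y hy hy1
    have hnet : ∀ v, ∃ t ∈ insert ya (Set.range fun i => yb (u i)), ‖yb v - t‖ ≤ ε := by
      intro v
      obtain ⟨i, hi⟩ := hcover v
      exact ⟨yb (u i), Set.mem_insert_of_mem _ ⟨i, rfl⟩, by rwa [add_sub_add_right_eq_sub]⟩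
    calc _ ≤ ε * ‖y‖ / (etaStar yb * (α * ‖ya‖)) :=
          infDist_conicHull_le hr hyb_norm hη hε hnet hy
      _ ≤ 2 * ε / (etaStar yb * α * ‖ya‖) := by
          rw [hy1, mul_one, ← mul_assoc]
          gcongr
          linarith
  · intro y hy _
    have hsub : insert ya (Set.range fun i => yb (u i)) ⊆ closure (conicHull (Set.range yb)) :=
      Set.insert_subset hya_mem (Set.range_subset_iff.mpr fun i =>
        subset_closure (subset_conicHull _ ⟨u i, rfl⟩))
    rw [Metric.infDist_zero_of_mem_closure (conicHull_subset_closure_conicHull hsub hy)]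
    positivity
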